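/- Let A be a Hopf algebra over ℂ with bijective antipode S, and let W : A ⊗ A → A ⊗ A be the linear map W(x ⊗ x') = Σ S⁻¹(x'₍₁₎)x ⊗ x'₍₂₎. Then W satisfies the Pentagon equation W₁₂ W₁₃ W₂₃ = W₂₃ W₁₂ as an identity of linear maps on A ⊗ A ⊗ A, where W₁₂ = W ⊗ id, W₂₃ = id ⊗ W, and W₁₃ acts as W on the first and third tensor factors and as the identity on the second. -/

import Mathlib

/-!
STATEMENT 16: Let A be a Hopf algebra over ℂ with bijective antipode S, and let
W : A ⊗ A → A ⊗ A be the linear map W(x ⊗ x') = Σ S⁻¹(x'₍₁₎)x ⊗ x'₍₂₎.  Then W satisfies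
the Pentagon equation W₁₂ W₁₃ W₂₃ = W₂₃ W₁₂ on A ⊗ A ⊗ A, with the leg-numbering
notation.
-/

open scoped TensorProduct

variable {A : Type*} [Semiring A] [HopfAlgebra ℂ A]

/-- The permutation of `(A ⊗ A) ⊗ A` exchanging the second and third tensor factors:
`(x ⊗ y) ⊗ z ↦ (x ⊗ z) ⊗ y`. -/
noncomputable def swap23 (A : Type*) [Semiring A] [Algebra ℂ A] :
    (A ⊗[ℂ] A) ⊗[ℂ] A ≃ₗ[ℂ] (A ⊗[ℂ] A) ⊗[ℂ] A :=
  (TensorProduct.assoc ℂ A A A).trans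
    ((TensorProduct.congr (LinearEquiv.refl ℂ A) (TensorProduct.comm ℂ A A)).trans
      (TensorProduct.assoc ℂ A A A).symm)

/-- Leg-numbering: `W₁₂ = W ⊗ id` on `(A ⊗ A) ⊗ A`. -/
noncomputable def leg12 (W : A ⊗[ℂ] A →ₗ[ℂ] A ⊗[ℂ] A) :
    (A ⊗[ℂ] A) ⊗[ℂ] A →ₗ[ℂ] (A ⊗[ℂ] A) ⊗[ℂ] A :=
  W.rTensor A

/-- Leg-numbering: `W₂₃ = id ⊗ W` on `(A ⊗ A) ⊗ A`, via the associator. -/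
noncomputable def leg23 (W : A ⊗[ℂ] A →ₗ[ℂ] A ⊗[ℂ] A) :
    (A ⊗[ℂ] A) ⊗[ℂ] A →ₗ[ℂ] (A ⊗[ℂ] A) ⊗[ℂ] A :=
  (TensorProduct.assoc ℂ A A A).symm.toLinearMap ∘ₗ W.lTensor A ∘ₗ
    (TensorProduct.assoc ℂ A A A).toLinearMap

/-- Leg-numbering: `W₁₃` acts as `W` on the first and third factors and as the identity
on the second, i.e. it is `W₁₂` conjugated by the swap of the last two factors. -/
noncomputable def leg13 (W : A ⊗[ℂ] A →ₗ[ℂ] A ⊗[ℂ] A) :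
    (A ⊗[ℂ] A) ⊗[ℂ] A →ₗ[ℂ] (A ⊗[ℂ] A) ⊗[ℂ] A :=
  (swap23 A).toLinearMap ∘ₗ leg12 W ∘ₗ (swap23 A).toLinearMap


/-! ### Auxiliary development for the proof of `pentagon_equation`. -/

open Coalgebra HopfAlgebra LinearMap

universe w

local notation "𝒮" => HopfAlgebra.antipode (R := ℂ)
local notation "εc" => Coalgebra.counit (R := ℂ)

lemma pent_sum_counit_smul_right {a : A} {ι_r : Type*} (r : Coalgebra.Repr ℂ a ι_r) :
    ∑ i ∈ r.index, Coalgebra.counit (R := ℂ) (r.left i) • r.right i = a := by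
  calc ∑ i ∈ r.index, Coalgebra.counit (R := ℂ) (r.left i) • r.right i
      = TensorProduct.lid ℂ A (∑ i ∈ r.index,
          Coalgebra.counit (R := ℂ) (r.left i) ⊗ₜ[ℂ] r.right i) := by
        rw [map_sum]; simp
    _ = TensorProduct.lid ℂ A (1 ⊗ₜ[ℂ] a) := by rw [Coalgebra.sum_counit_tmul_eq r]
    _ = a := by simp

lemma pent_sum_counit_smul_left {a : A} {ι_r : Type*} (r : Coalgebra.Repr ℂ a ι_r) :
    ∑ i ∈ r.index, Coalgebra.counit (R := ℂ) (r.right i) • r.left i = a := by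
  calc ∑ i ∈ r.index, Coalgebra.counit (R := ℂ) (r.right i) • r.left i
      = TensorProduct.rid ℂ A (∑ i ∈ r.index,
          r.left i ⊗ₜ[ℂ] Coalgebra.counit (R := ℂ) (r.right i)) := by
        rw [map_sum]; simp
    _ = TensorProduct.rid ℂ A (a ⊗ₜ[ℂ] 1) := by rw [Coalgebra.sum_tmul_counit_eq r]
    _ = a := by simp

noncomputable def pentReprMul {a b : A} {ι_p : Type*} (p : Coalgebra.Repr ℂ a ι_p) {ι_q : Type*} (q : Coalgebra.Repr ℂ b ι_q) :
    Coalgebra.Repr ℂ (a * b) (ι_p × ι_q) where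
  index := p.index ×ˢ q.index
  left := fun ij => p.left ij.1 * q.left ij.2
  right := fun ij => p.right ij.1 * q.right ij.2
  eq := by
    rw [Bialgebra.comul_mul, ← p.eq, ← q.eq, Finset.sum_mul_sum, Finset.sum_product]
    simp only [Algebra.TensorProduct.tmul_mul_tmul]

lemma pent_antipode_one : HopfAlgebra.antipode (R := ℂ) (1 : A) = 1 := by
  have h := HopfAlgebra.mul_antipode_rTensor_comul_apply (R := ℂ) (a := (1 : A))
  simpa [Algebra.TensorProduct.one_def] using h

/-- `u ⊗ (v ⊗ w) ↦ S(α·u) · ((β·v) · (S w · S γ))`. -/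
noncomputable def pentChi (α β γ : A) : A ⊗[ℂ] (A ⊗[ℂ] A) →ₗ[ℂ] A :=
  LinearMap.mul' ℂ A ∘ₗ TensorProduct.map
    (HopfAlgebra.antipode (R := ℂ) ∘ₗ LinearMap.mulLeft ℂ α)
    (LinearMap.mul' ℂ A ∘ₗ TensorProduct.map (LinearMap.mulLeft ℂ β)
      (LinearMap.mulRight ℂ (HopfAlgebra.antipode (R := ℂ) γ) ∘ₗ HopfAlgebra.antipode (R := ℂ)))

@[simp] lemma pentChi_tmul (α β γ u v w : A) :
    pentChi α β γ (u ⊗ₜ[ℂ] (v ⊗ₜ[ℂ] w)) =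
      HopfAlgebra.antipode (R := ℂ) (α * u) *
        ((β * v) * (HopfAlgebra.antipode (R := ℂ) w * HopfAlgebra.antipode (R := ℂ) γ)) := by
  simp [pentChi]

/-- `u ⊗ (v ⊗ w) ↦ S(u·b) · (v · S w)`. -/
noncomputable def pentPsi (b : A) : A ⊗[ℂ] (A ⊗[ℂ] A) →ₗ[ℂ] A :=
  LinearMap.mul' ℂ A ∘ₗ TensorProduct.map
    (HopfAlgebra.antipode (R := ℂ) ∘ₗ LinearMap.mulRight ℂ b)
    (LinearMap.mul' ℂ A ∘ₗ TensorProduct.map LinearMap.id (HopfAlgebra.antipode (R := ℂ)))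

@[simp] lemma pentPsi_tmul (b u v w : A) :
    pentPsi b (u ⊗ₜ[ℂ] (v ⊗ₜ[ℂ] w)) =
      HopfAlgebra.antipode (R := ℂ) (u * b) * (v * HopfAlgebra.antipode (R := ℂ) w) := by
  simp [pentPsi]

lemma pent_collapse1 (c d : A) {x : A} {ι_r : Type*} (r : Coalgebra.Repr ℂ x ι_r) (e : A) :
    (∑ l ∈ r.index, c * ((d * r.left l) * (𝒮 (r.right l) * e)))
      = εc x • (c * (d * e)) := by
  rw [← Finset.mul_sum]
  have h1 : ∀ l, (d * r.left l) * (𝒮 (r.right l) * e)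
      = d * ((r.left l * 𝒮 (r.right l)) * e) := by
    intro l; rw [mul_assoc, ← mul_assoc (r.left l)]
  rw [Finset.sum_congr rfl fun l _ => h1 l, ← Finset.mul_sum, ← Finset.sum_mul,
    HopfAlgebra.sum_mul_antipode_eq_smul r]
  simp [smul_mul_assoc, mul_smul_comm]

lemma pent_collapse2 {x : A} {ι_r : Type*} (r : Coalgebra.Repr ℂ x ι_r) (α e : A) :
    (∑ j ∈ r.index, εc (r.right j) • (𝒮 (α * r.left j) * e)) = 𝒮 (α * x) * e := by
  have h1 : ∀ j, εc (r.right j) • (𝒮 (α * r.left j) * e)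
      = (εc (r.right j) • 𝒮 (α * r.left j)) * e := fun j => (smul_mul_assoc _ _ _).symm
  rw [Finset.sum_congr rfl fun j _ => h1 j, ← Finset.sum_mul]
  congr 1
  have h := congrArg (𝒮 ∘ₗ LinearMap.mulLeft ℂ α) (pent_sum_counit_smul_left r)
  simpa [map_sum, map_smul] using h

lemma pent_collapse3 {x : A} {ι_r : Type*} (r : Coalgebra.Repr ℂ x ι_r) (c : A) :
    (∑ l ∈ r.index, c * (r.left l * 𝒮 (r.right l))) = εc x • c := by
  rw [← Finset.mul_sum, HopfAlgebra.sum_mul_antipode_eq_smul r]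
  simp [mul_smul_comm]

lemma pent_collapseA {x y : A} {ι_p : Type*} (p : Coalgebra.Repr ℂ x ι_p) {ι_q : Type*} (q : Coalgebra.Repr ℂ y ι_q) (C : A) :
    (∑ k ∈ p.index, ∑ l ∈ q.index,
      𝒮 (p.left k * q.left l) * ((p.right k * q.right l) * C))
      = (εc x * εc y) • C := by
  have h1 : ∀ k l, 𝒮 (p.left k * q.left l) * ((p.right k * q.right l) * C)
      = (𝒮 (p.left k * q.left l) * (p.right k * q.right l)) * C :=
    fun k l => (mul_assoc _ _ _).symm
  rw [Finset.sum_congr rfl fun k _ => Finset.sum_congr rfl fun l _ => h1 k l]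
  have h2 : ∀ k, (∑ l ∈ q.index,
      (𝒮 (p.left k * q.left l) * (p.right k * q.right l)) * C)
      = (∑ l ∈ q.index, 𝒮 (p.left k * q.left l) * (p.right k * q.right l)) * C :=
    fun k => (Finset.sum_mul _ _ _).symm
  rw [Finset.sum_congr rfl fun k _ => h2 k, ← Finset.sum_mul]
  have h3 := HopfAlgebra.sum_antipode_mul_eq_smul (pentReprMul p q)
  simp only [pentReprMul] at h3
  rw [Finset.sum_product] at h3
  rw [h3, Bialgebra.counit_mul, smul_mul_assoc, one_mul]

lemma pent_antipode_mul (a b : A) : 𝒮 (a * b) = 𝒮 b * 𝒮 a := by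
  set ra := ℛ ℂ a with hra
  set rb := ℛ ℂ b with hrb
  -- the pivot quadruple sum `T`, summation order i k j l
  -- Claim B : T = 𝒮 (a * b)
  have hB :
      (∑ i ∈ ra.index, ∑ k ∈ (ℛ ℂ (ra.left i)).index, ∑ j ∈ rb.index,
        ∑ l ∈ (ℛ ℂ (rb.left j)).index,
          𝒮 ((ℛ ℂ (ra.left i)).left k * (ℛ ℂ (rb.left j)).left l) *
            (((ℛ ℂ (ra.left i)).right k * (ℛ ℂ (rb.left j)).right l) *
              (𝒮 (rb.right j) * 𝒮 (ra.right i))))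
      = 𝒮 (a * b) := by
    -- step 1 : change the nesting of the Sweedler legs of `b`
    have hB1 : ∀ i, ∀ k,
        (∑ j ∈ rb.index, ∑ l ∈ (ℛ ℂ (rb.left j)).index,
          𝒮 ((ℛ ℂ (ra.left i)).left k * (ℛ ℂ (rb.left j)).left l) *
            (((ℛ ℂ (ra.left i)).right k * (ℛ ℂ (rb.left j)).right l) *
              (𝒮 (rb.right j) * 𝒮 (ra.right i))))
        = ∑ j ∈ rb.index, ∑ l ∈ (ℛ ℂ (rb.right j)).index,
            𝒮 ((ℛ ℂ (ra.left i)).left k * rb.left j) *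
              (((ℛ ℂ (ra.left i)).right k * (ℛ ℂ (rb.right j)).left l) *
                (𝒮 ((ℛ ℂ (rb.right j)).right l) * 𝒮 (ra.right i))) := by
      intro i k
      have key := Coalgebra.sum_tmul_tmul_eq rb
        (fun j => ℛ ℂ (rb.left j)) (fun j => ℛ ℂ (rb.right j))
      have h2 := congrArg
        (pentChi ((ℛ ℂ (ra.left i)).left k) ((ℛ ℂ (ra.left i)).right k) (ra.right i)) key
      simpa [map_sum] using h2
    rw [Finset.sum_congr rfl fun i _ => Finset.sum_congr rfl fun k _ => hB1 i k]
    -- step 2 : collapse the inner `l`-sum, then the `j`-sum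
    have hB2 : ∀ i, ∀ k,
        (∑ j ∈ rb.index, ∑ l ∈ (ℛ ℂ (rb.right j)).index,
          𝒮 ((ℛ ℂ (ra.left i)).left k * rb.left j) *
            (((ℛ ℂ (ra.left i)).right k * (ℛ ℂ (rb.right j)).left l) *
              (𝒮 ((ℛ ℂ (rb.right j)).right l) * 𝒮 (ra.right i))))
        = 𝒮 ((ℛ ℂ (ra.left i)).left k * b) *
            ((ℛ ℂ (ra.left i)).right k * 𝒮 (ra.right i)) := by
      intro i k
      rw [Finset.sum_congr rfl fun j _ =>
        pent_collapse1 (𝒮 ((ℛ ℂ (ra.left i)).left k * rb.left j))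
          ((ℛ ℂ (ra.left i)).right k) (ℛ ℂ (rb.right j)) (𝒮 (ra.right i))]
      exact pent_collapse2 rb ((ℛ ℂ (ra.left i)).left k)
        ((ℛ ℂ (ra.left i)).right k * 𝒮 (ra.right i))
    rw [Finset.sum_congr rfl fun i _ => Finset.sum_congr rfl fun k _ => hB2 i k]
    -- step 3 : change the nesting of the Sweedler legs of `a`
    have hB3 :
        (∑ i ∈ ra.index, ∑ k ∈ (ℛ ℂ (ra.left i)).index,
          𝒮 ((ℛ ℂ (ra.left i)).left k * b) *
            ((ℛ ℂ (ra.left i)).right k * 𝒮 (ra.right i)))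
        = ∑ i ∈ ra.index, ∑ l ∈ (ℛ ℂ (ra.right i)).index,
            𝒮 (ra.left i * b) *
              ((ℛ ℂ (ra.right i)).left l * 𝒮 ((ℛ ℂ (ra.right i)).right l)) := by
      have key := Coalgebra.sum_tmul_tmul_eq ra
        (fun i => ℛ ℂ (ra.left i)) (fun i => ℛ ℂ (ra.right i))
      have h2 := congrArg (pentPsi b) key
      simpa [map_sum] using h2
    rw [hB3]
    -- step 4 : collapse everything
    rw [Finset.sum_congr rfl fun i _ =>
      pent_collapse3 (ℛ ℂ (ra.right i)) (𝒮 (ra.left i * b))]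
    have h := congrArg (𝒮 ∘ₗ LinearMap.mulRight ℂ b) (pent_sum_counit_smul_left ra)
    simpa [map_sum, map_smul] using h
  -- Claim A : T = 𝒮 b * 𝒮 a
  have hA :
      (∑ i ∈ ra.index, ∑ k ∈ (ℛ ℂ (ra.left i)).index, ∑ j ∈ rb.index,
        ∑ l ∈ (ℛ ℂ (rb.left j)).index,
          𝒮 ((ℛ ℂ (ra.left i)).left k * (ℛ ℂ (rb.left j)).left l) *
            (((ℛ ℂ (ra.left i)).right k * (ℛ ℂ (rb.left j)).right l) *
              (𝒮 (rb.right j) * 𝒮 (ra.right i))))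
      = 𝒮 b * 𝒮 a := by
    -- reorder the sums so that `j` comes before `k`
    rw [Finset.sum_congr rfl fun i _ => Finset.sum_comm]
    -- collapse the inner double sum
    rw [Finset.sum_congr rfl fun i _ => Finset.sum_congr rfl fun j _ =>
      pent_collapseA (ℛ ℂ (ra.left i)) (ℛ ℂ (rb.left j))
        (𝒮 (rb.right j) * 𝒮 (ra.right i))]
    have hSb : 𝒮 b = ∑ j ∈ rb.index, εc (rb.left j) • 𝒮 (rb.right j) := by
      have h := congrArg (𝒮 : A →ₗ[ℂ] A) (pent_sum_counit_smul_right rb)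
      simp only [map_sum, map_smul] at h
      exact h.symm
    have hSa : 𝒮 a = ∑ i ∈ ra.index, εc (ra.left i) • 𝒮 (ra.right i) := by
      have h := congrArg (𝒮 : A →ₗ[ℂ] A) (pent_sum_counit_smul_right ra)
      simp only [map_sum, map_smul] at h
      exact h.symm
    rw [hSb, hSa, Finset.sum_mul_sum, Finset.sum_comm]
    refine Finset.sum_congr rfl fun i _ => Finset.sum_congr rfl fun j _ => ?_
    rw [smul_mul_assoc, mul_smul_comm, smul_smul, mul_comm]
  rw [← hB, hA]

lemma pent_S_Sinv (Sinv : A →ₗ[ℂ] A)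
    (hS₁ : HopfAlgebra.antipode (R := ℂ) (A := A) ∘ₗ Sinv = LinearMap.id) (u : A) :
    𝒮 (Sinv u) = u := by simpa using LinearMap.congr_fun hS₁ u

lemma pent_Sinv_S (Sinv : A →ₗ[ℂ] A)
    (hS₂ : Sinv ∘ₗ HopfAlgebra.antipode (R := ℂ) (A := A) = LinearMap.id) (u : A) :
    Sinv (𝒮 u) = u := by simpa using LinearMap.congr_fun hS₂ u

lemma pent_Sinv_one (Sinv : A →ₗ[ℂ] A)
    (hS₂ : Sinv ∘ₗ HopfAlgebra.antipode (R := ℂ) (A := A) = LinearMap.id) :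
    Sinv 1 = 1 := by
  conv_lhs => rw [← pent_antipode_one (A := A)]
  rw [pent_Sinv_S Sinv hS₂]

lemma pent_Sinv_mul (Sinv : A →ₗ[ℂ] A)
    (hS₁ : HopfAlgebra.antipode (R := ℂ) (A := A) ∘ₗ Sinv = LinearMap.id)
    (hS₂ : Sinv ∘ₗ HopfAlgebra.antipode (R := ℂ) (A := A) = LinearMap.id) (x y : A) :
    Sinv (x * y) = Sinv y * Sinv x := by
  have hinj : ∀ u v : A, 𝒮 u = 𝒮 v → u = v := fun u v h => by
    rw [← pent_Sinv_S Sinv hS₂ u, h, pent_Sinv_S Sinv hS₂ v]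
  apply hinj
  rw [pent_S_Sinv Sinv hS₁, pent_antipode_mul, pent_S_Sinv Sinv hS₁, pent_S_Sinv Sinv hS₁]

lemma pent_c1 (Sinv : A →ₗ[ℂ] A)
    (hS₁ : HopfAlgebra.antipode (R := ℂ) (A := A) ∘ₗ Sinv = LinearMap.id)
    (hS₂ : Sinv ∘ₗ HopfAlgebra.antipode (R := ℂ) (A := A) = LinearMap.id)
    {x : A} {ι_r : Type*} (r : Coalgebra.Repr ℂ x ι_r) :
    ∑ i ∈ r.index, r.right i * Sinv (r.left i) = εc x • (1 : A) := by
  have h1 : ∀ i, r.right i * Sinv (r.left i) = Sinv (r.left i * 𝒮 (r.right i)) := by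
    intro i
    rw [pent_Sinv_mul Sinv hS₁ hS₂, pent_Sinv_S Sinv hS₂]
  rw [Finset.sum_congr rfl fun i _ => h1 i, ← map_sum,
    HopfAlgebra.sum_mul_antipode_eq_smul r, map_smul, pent_Sinv_one Sinv hS₂]

lemma pent_c2 (Sinv : A →ₗ[ℂ] A)
    (hS₁ : HopfAlgebra.antipode (R := ℂ) (A := A) ∘ₗ Sinv = LinearMap.id)
    (hS₂ : Sinv ∘ₗ HopfAlgebra.antipode (R := ℂ) (A := A) = LinearMap.id)
    {x : A} {ι_r : Type*} (r : Coalgebra.Repr ℂ x ι_r) :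
    ∑ i ∈ r.index, Sinv (r.right i) * r.left i = εc x • (1 : A) := by
  have h1 : ∀ i, Sinv (r.right i) * r.left i = Sinv (𝒮 (r.left i) * r.right i) := by
    intro i
    rw [pent_Sinv_mul Sinv hS₁ hS₂, pent_Sinv_S Sinv hS₂]
  rw [Finset.sum_congr rfl fun i _ => h1 i, ← map_sum,
    HopfAlgebra.sum_antipode_mul_eq_smul r, map_smul, pent_Sinv_one Sinv hS₂]

/-- The Galois map `V(x ⊗ y) = Σ y₍₁₎x ⊗ y₍₂₎`. -/
noncomputable def pentV : A ⊗[ℂ] A →ₗ[ℂ] A ⊗[ℂ] A :=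
  ((LinearMap.mul' ℂ A ∘ₗ (TensorProduct.comm ℂ A A).toLinearMap).rTensor A) ∘ₗ
    (TensorProduct.assoc ℂ A A A).symm.toLinearMap ∘ₗ
    (Coalgebra.comul (R := ℂ) (A := A)).lTensor A

lemma pentV_tmul (x y : A) {ι_r : Type*} (r : Coalgebra.Repr ℂ y ι_r) :
    pentV (x ⊗ₜ[ℂ] y) = ∑ i ∈ r.index, (r.left i * x) ⊗ₜ[ℂ] r.right i := by
  simp only [pentV, LinearMap.comp_apply, LinearMap.lTensor_tmul, ← r.eq,
    TensorProduct.tmul_sum, map_sum, LinearEquiv.coe_coe, TensorProduct.assoc_symm_tmul,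
    LinearMap.rTensor_tmul, TensorProduct.comm_tmul, LinearMap.mul'_apply]

noncomputable def pentPhi (Sinv : A →ₗ[ℂ] A) (x : A) :
    A ⊗[ℂ] (A ⊗[ℂ] A) →ₗ[ℂ] A ⊗[ℂ] A :=
  ((LinearMap.mul' ℂ A ∘ₗ (TensorProduct.comm ℂ A A).toLinearMap ∘ₗ
      ((LinearMap.mulRight ℂ x ∘ₗ Sinv).rTensor A)).rTensor A) ∘ₗ
    (TensorProduct.assoc ℂ A A A).symm.toLinearMap

@[simp] lemma pentPhi_tmul (Sinv : A →ₗ[ℂ] A) (x u v w : A) :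
    pentPhi Sinv x (u ⊗ₜ[ℂ] (v ⊗ₜ[ℂ] w)) = (v * (Sinv u * x)) ⊗ₜ[ℂ] w := by
  simp [pentPhi]

noncomputable def pentPhi' (Sinv : A →ₗ[ℂ] A) (x : A) :
    A ⊗[ℂ] (A ⊗[ℂ] A) →ₗ[ℂ] A ⊗[ℂ] A :=
  ((LinearMap.mul' ℂ A ∘ₗ (TensorProduct.comm ℂ A A).toLinearMap ∘ₗ
      TensorProduct.map (LinearMap.mulRight ℂ x) Sinv).rTensor A) ∘ₗ
    (TensorProduct.assoc ℂ A A A).symm.toLinearMap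

@[simp] lemma pentPhi'_tmul (Sinv : A →ₗ[ℂ] A) (x u v w : A) :
    pentPhi' Sinv x (u ⊗ₜ[ℂ] (v ⊗ₜ[ℂ] w)) = (Sinv v * (u * x)) ⊗ₜ[ℂ] w := by
  simp [pentPhi']

lemma pent_row_collapse1 (Sinv : A →ₗ[ℂ] A)
    (hS₁ : HopfAlgebra.antipode (R := ℂ) (A := A) ∘ₗ Sinv = LinearMap.id)
    (hS₂ : Sinv ∘ₗ HopfAlgebra.antipode (R := ℂ) (A := A) = LinearMap.id)
    (x : A) {c : A} {ι_rc : Type*} (rc : Coalgebra.Repr ℂ c ι_rc) (w : A) :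
    (∑ j ∈ rc.index, (rc.right j * (Sinv (rc.left j) * x)) ⊗ₜ[ℂ] w)
      = x ⊗ₜ[ℂ] (εc c • w) := by
  rw [← TensorProduct.sum_tmul]
  have h1 : ∀ j, rc.right j * (Sinv (rc.left j) * x)
      = (rc.right j * Sinv (rc.left j)) * x := fun j => (mul_assoc _ _ _).symm
  rw [Finset.sum_congr rfl fun j _ => h1 j, ← Finset.sum_mul, pent_c1 Sinv hS₁ hS₂ rc,
    smul_mul_assoc, one_mul, TensorProduct.smul_tmul]

lemma pent_row_collapse2 (Sinv : A →ₗ[ℂ] A)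
    (hS₁ : HopfAlgebra.antipode (R := ℂ) (A := A) ∘ₗ Sinv = LinearMap.id)
    (hS₂ : Sinv ∘ₗ HopfAlgebra.antipode (R := ℂ) (A := A) = LinearMap.id)
    (x : A) {c : A} {ι_rc : Type*} (rc : Coalgebra.Repr ℂ c ι_rc) (w : A) :
    (∑ j ∈ rc.index, (Sinv (rc.right j) * (rc.left j * x)) ⊗ₜ[ℂ] w)
      = x ⊗ₜ[ℂ] (εc c • w) := by
  rw [← TensorProduct.sum_tmul]
  have h1 : ∀ j, Sinv (rc.right j) * (rc.left j * x)
      = (Sinv (rc.right j) * rc.left j) * x := fun j => (mul_assoc _ _ _).symm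
  rw [Finset.sum_congr rfl fun j _ => h1 j, ← Finset.sum_mul, pent_c2 Sinv hS₁ hS₂ rc,
    smul_mul_assoc, one_mul, TensorProduct.smul_tmul]

/-- Reindex a representation by a finite index type in an arbitrary universe. -/
noncomputable def pentReprU {x : A} {ι_r : Type*} (r : Coalgebra.Repr ℂ x ι_r) : Coalgebra.Repr ℂ x (ULift.{w} (Fin r.index.card)) where
  index := (Finset.univ : Finset (ULift.{w} (Fin r.index.card)))
  left := fun i => r.left (r.index.equivFin.symm i.down).1
  right := fun i => r.right (r.index.equivFin.symm i.down).1
  eq := by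
    rw [← r.eq, ← Finset.sum_coe_sort r.index (fun j => r.left j ⊗ₜ[ℂ] r.right j)]
    exact Fintype.sum_equiv (Equiv.ulift.trans r.index.equivFin.symm) _ _ (fun i => rfl)

lemma pentReprU_sum {x : A} {ι_r : Type*} (r : Coalgebra.Repr ℂ x ι_r) {M : Type*} [AddCommMonoid M]
    (g : A → A → M) :
    ∑ i ∈ (pentReprU r : Coalgebra.Repr ℂ x (ULift.{w} (Fin r.index.card))).index, g ((pentReprU r : Coalgebra.Repr ℂ x (ULift.{w} (Fin r.index.card))).left i) ((pentReprU r : Coalgebra.Repr ℂ x (ULift.{w} (Fin r.index.card))).right i)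
      = ∑ i ∈ r.index, g (r.left i) (r.right i) := by
  rw [← Finset.sum_coe_sort r.index (fun j => g (r.left j) (r.right j))]
  exact Fintype.sum_equiv (Equiv.ulift.trans r.index.equivFin.symm) _ _ (fun i => rfl)

lemma pent_VW (Sinv : A →ₗ[ℂ] A)
    (hS₁ : HopfAlgebra.antipode (R := ℂ) (A := A) ∘ₗ Sinv = LinearMap.id)
    (hS₂ : Sinv ∘ₗ HopfAlgebra.antipode (R := ℂ) (A := A) = LinearMap.id)
    (W : A ⊗[ℂ] A →ₗ[ℂ] A ⊗[ℂ] A)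
    (hW : ∀ (x x' : A) (ι : Type*) (r : Coalgebra.Repr ℂ x' ι),
      W (x ⊗ₜ[ℂ] x') = ∑ i ∈ r.index, (Sinv (r.left i) * x) ⊗ₜ[ℂ] r.right i) :
    pentV ∘ₗ W = LinearMap.id := by
  have hWc : ∀ (u v : A), W (u ⊗ₜ[ℂ] v) = ∑ i ∈ (ℛ ℂ v).index,
      (Sinv ((ℛ ℂ v).left i) * u) ⊗ₜ[ℂ] (ℛ ℂ v).right i := by
    intro u v
    rw [hW u v _ (pentReprU (ℛ ℂ v))]
    exact pentReprU_sum (ℛ ℂ v) (fun p q => (Sinv p * u) ⊗ₜ[ℂ] q)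
  apply TensorProduct.ext'
  intro x y
  rw [LinearMap.comp_apply, LinearMap.id_coe, id_eq, hWc x y, map_sum]
  rw [Finset.sum_congr rfl fun i _ =>
    pentV_tmul (Sinv ((ℛ ℂ y).left i) * x) ((ℛ ℂ y).right i) (ℛ ℂ ((ℛ ℂ y).right i))]
  have key := Coalgebra.sum_tmul_tmul_eq (ℛ ℂ y)
    (fun i => ℛ ℂ ((ℛ ℂ y).left i)) (fun i => ℛ ℂ ((ℛ ℂ y).right i))
  have h2 := congrArg (pentPhi Sinv x) key
  simp only [map_sum, pentPhi_tmul] at h2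
  rw [← h2]
  rw [Finset.sum_congr rfl fun i _ =>
    pent_row_collapse1 Sinv hS₁ hS₂ x (ℛ ℂ ((ℛ ℂ y).left i)) ((ℛ ℂ y).right i),
    ← TensorProduct.tmul_sum, pent_sum_counit_smul_right (ℛ ℂ y)]

lemma pent_WV (Sinv : A →ₗ[ℂ] A)
    (hS₁ : HopfAlgebra.antipode (R := ℂ) (A := A) ∘ₗ Sinv = LinearMap.id)
    (hS₂ : Sinv ∘ₗ HopfAlgebra.antipode (R := ℂ) (A := A) = LinearMap.id)
    (W : A ⊗[ℂ] A →ₗ[ℂ] A ⊗[ℂ] A)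
    (hW : ∀ (x x' : A) (ι : Type*) (r : Coalgebra.Repr ℂ x' ι),
      W (x ⊗ₜ[ℂ] x') = ∑ i ∈ r.index, (Sinv (r.left i) * x) ⊗ₜ[ℂ] r.right i) :
    W ∘ₗ pentV = LinearMap.id := by
  have hWc : ∀ (u v : A), W (u ⊗ₜ[ℂ] v) = ∑ i ∈ (ℛ ℂ v).index,
      (Sinv ((ℛ ℂ v).left i) * u) ⊗ₜ[ℂ] (ℛ ℂ v).right i := by
    intro u v
    rw [hW u v _ (pentReprU (ℛ ℂ v))]
    exact pentReprU_sum (ℛ ℂ v) (fun p q => (Sinv p * u) ⊗ₜ[ℂ] q)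
  apply TensorProduct.ext'
  intro x y
  rw [LinearMap.comp_apply, LinearMap.id_coe, id_eq, pentV_tmul x y (ℛ ℂ y), map_sum]
  rw [Finset.sum_congr rfl fun i _ => hWc ((ℛ ℂ y).left i * x) ((ℛ ℂ y).right i)]
  have key := Coalgebra.sum_tmul_tmul_eq (ℛ ℂ y)
    (fun i => ℛ ℂ ((ℛ ℂ y).left i)) (fun i => ℛ ℂ ((ℛ ℂ y).right i))
  have h2 := congrArg (pentPhi' Sinv x) key
  simp only [map_sum, pentPhi'_tmul] at h2
  rw [← h2]
  rw [Finset.sum_congr rfl fun i _ =>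
    pent_row_collapse2 Sinv hS₁ hS₂ x (ℛ ℂ ((ℛ ℂ y).left i)) ((ℛ ℂ y).right i),
    ← TensorProduct.tmul_sum, pent_sum_counit_smul_right (ℛ ℂ y)]

@[simp] lemma pent_swap23_tmul (x y z : A) :
    swap23 A ((x ⊗ₜ[ℂ] y) ⊗ₜ[ℂ] z) = (x ⊗ₜ[ℂ] z) ⊗ₜ[ℂ] y := by
  simp [swap23]

lemma pent_swap23_swap23 (t : (A ⊗[ℂ] A) ⊗[ℂ] A) : swap23 A (swap23 A t) = t := by
  have h : (swap23 A).toLinearMap ∘ₗ (swap23 A).toLinearMap = LinearMap.id :=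
    TensorProduct.ext_threefold fun x y z => by simp
  simpa using LinearMap.congr_fun h t

noncomputable def pentTheta (c d : A) : A ⊗[ℂ] (A ⊗[ℂ] A) →ₗ[ℂ] (A ⊗[ℂ] A) ⊗[ℂ] A :=
  (TensorProduct.assoc ℂ A A A).symm.toLinearMap ∘ₗ
    TensorProduct.map (LinearMap.mulRight ℂ c)
      (TensorProduct.map (LinearMap.mulRight ℂ d) LinearMap.id)

@[simp] lemma pentTheta_tmul (c d u v w : A) :
    pentTheta c d (u ⊗ₜ[ℂ] (v ⊗ₜ[ℂ] w)) = ((u * c) ⊗ₜ[ℂ] (v * d)) ⊗ₜ[ℂ] w := by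
  simp [pentTheta]

lemma pent_leg12_comp (f g : A ⊗[ℂ] A →ₗ[ℂ] A ⊗[ℂ] A) :
    leg12 (f ∘ₗ g) = leg12 f ∘ₗ leg12 g := LinearMap.rTensor_comp A f g

lemma pent_leg12_id : leg12 (LinearMap.id : A ⊗[ℂ] A →ₗ[ℂ] A ⊗[ℂ] A) = LinearMap.id :=
  LinearMap.rTensor_id A _

lemma pent_leg23_comp (f g : A ⊗[ℂ] A →ₗ[ℂ] A ⊗[ℂ] A) :
    leg23 (f ∘ₗ g) = leg23 f ∘ₗ leg23 g := by
  apply LinearMap.ext; intro t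
  simp [leg23, LinearMap.lTensor_comp]

lemma pent_leg23_id : leg23 (LinearMap.id : A ⊗[ℂ] A →ₗ[ℂ] A ⊗[ℂ] A) = LinearMap.id := by
  apply LinearMap.ext; intro t
  simp [leg23]

lemma pent_leg13_comp (f g : A ⊗[ℂ] A →ₗ[ℂ] A ⊗[ℂ] A) :
    leg13 (f ∘ₗ g) = leg13 f ∘ₗ leg13 g := by
  apply LinearMap.ext; intro t
  simp [leg13, pent_leg12_comp, pent_swap23_swap23]

lemma pent_leg13_id : leg13 (LinearMap.id : A ⊗[ℂ] A →ₗ[ℂ] A ⊗[ℂ] A) = LinearMap.id := by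
  apply LinearMap.ext; intro t
  simp [leg13, pent_leg12_id, pent_swap23_swap23]

lemma pent_Vpentagon :
    leg23 pentV ∘ₗ leg13 pentV ∘ₗ leg12 (pentV (A := A)) = leg12 pentV ∘ₗ leg23 pentV := by
  apply TensorProduct.ext_threefold
  intro x y z
  simp only [LinearMap.comp_apply]
  have e1 : leg12 pentV ((x ⊗ₜ[ℂ] y) ⊗ₜ[ℂ] z)
      = ∑ i ∈ (ℛ ℂ y).index, (((ℛ ℂ y).left i * x) ⊗ₜ[ℂ] (ℛ ℂ y).right i) ⊗ₜ[ℂ] z := by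
    simp only [leg12, LinearMap.rTensor_tmul, pentV_tmul x y (ℛ ℂ y), TensorProduct.sum_tmul]
  rw [e1, map_sum]
  have e2 : ∀ i, leg13 pentV ((((ℛ ℂ y).left i * x) ⊗ₜ[ℂ] (ℛ ℂ y).right i) ⊗ₜ[ℂ] z)
      = ∑ j ∈ (ℛ ℂ z).index,
          (((ℛ ℂ z).left j * ((ℛ ℂ y).left i * x)) ⊗ₜ[ℂ] (ℛ ℂ y).right i) ⊗ₜ[ℂ]
            (ℛ ℂ z).right j := by
    intro i
    simp only [leg13, leg12, LinearMap.comp_apply, LinearEquiv.coe_coe, pent_swap23_tmul,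
      LinearMap.rTensor_tmul, pentV_tmul ((ℛ ℂ y).left i * x) z (ℛ ℂ z),
      TensorProduct.sum_tmul, map_sum]
  rw [Finset.sum_congr rfl fun i _ => e2 i]
  have e3 : ∀ i j, leg23 pentV
        ((((ℛ ℂ z).left j * ((ℛ ℂ y).left i * x)) ⊗ₜ[ℂ] (ℛ ℂ y).right i) ⊗ₜ[ℂ] (ℛ ℂ z).right j)
      = ∑ k ∈ (ℛ ℂ ((ℛ ℂ z).right j)).index,
          (((ℛ ℂ z).left j * ((ℛ ℂ y).left i * x)) ⊗ₜ[ℂ]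
            ((ℛ ℂ ((ℛ ℂ z).right j)).left k * (ℛ ℂ y).right i)) ⊗ₜ[ℂ]
            (ℛ ℂ ((ℛ ℂ z).right j)).right k := by
    intro i j
    simp only [leg23, LinearMap.comp_apply, LinearEquiv.coe_coe, TensorProduct.assoc_tmul,
      LinearMap.lTensor_tmul,
      pentV_tmul ((ℛ ℂ y).right i) ((ℛ ℂ z).right j) (ℛ ℂ ((ℛ ℂ z).right j)),
      TensorProduct.tmul_sum, map_sum, TensorProduct.assoc_symm_tmul]
  rw [map_sum]
  rw [Finset.sum_congr rfl fun i _ => map_sum (leg23 pentV) _ _]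
  rw [Finset.sum_congr rfl fun i _ => Finset.sum_congr rfl fun j _ => e3 i j]
  -- the right-hand side
  have f1 : leg23 pentV ((x ⊗ₜ[ℂ] y) ⊗ₜ[ℂ] z)
      = ∑ j ∈ (ℛ ℂ z).index, (x ⊗ₜ[ℂ] ((ℛ ℂ z).left j * y)) ⊗ₜ[ℂ] (ℛ ℂ z).right j := by
    simp only [leg23, LinearMap.comp_apply, LinearEquiv.coe_coe, TensorProduct.assoc_tmul,
      LinearMap.lTensor_tmul, pentV_tmul y z (ℛ ℂ z), TensorProduct.tmul_sum, map_sum,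
      TensorProduct.assoc_symm_tmul]
  rw [f1, map_sum]
  have f2 : ∀ j, leg12 pentV ((x ⊗ₜ[ℂ] ((ℛ ℂ z).left j * y)) ⊗ₜ[ℂ] (ℛ ℂ z).right j)
      = ∑ k ∈ (ℛ ℂ ((ℛ ℂ z).left j)).index, ∑ i ∈ (ℛ ℂ y).index,
          ((((ℛ ℂ ((ℛ ℂ z).left j)).left k * (ℛ ℂ y).left i) * x) ⊗ₜ[ℂ]
            ((ℛ ℂ ((ℛ ℂ z).left j)).right k * (ℛ ℂ y).right i)) ⊗ₜ[ℂ] (ℛ ℂ z).right j := by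
    intro j
    simp only [leg12, LinearMap.rTensor_tmul,
      pentV_tmul x ((ℛ ℂ z).left j * y) (pentReprMul (ℛ ℂ ((ℛ ℂ z).left j)) (ℛ ℂ y)),
      pentReprMul, Finset.sum_product, TensorProduct.sum_tmul]
  rw [Finset.sum_congr rfl fun j _ => f2 j]
  -- switch the nesting of the Sweedler legs of z on the left-hand side
  have key : ∀ i : (ℛ ℂ y).ι, (∑ j ∈ (ℛ ℂ z).index, ∑ k ∈ (ℛ ℂ ((ℛ ℂ z).right j)).index,
        (((ℛ ℂ z).left j * ((ℛ ℂ y).left i * x)) ⊗ₜ[ℂ]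
          ((ℛ ℂ ((ℛ ℂ z).right j)).left k * (ℛ ℂ y).right i)) ⊗ₜ[ℂ]
          (ℛ ℂ ((ℛ ℂ z).right j)).right k)
      = ∑ j ∈ (ℛ ℂ z).index, ∑ k ∈ (ℛ ℂ ((ℛ ℂ z).left j)).index,
          (((ℛ ℂ ((ℛ ℂ z).left j)).left k * ((ℛ ℂ y).left i * x)) ⊗ₜ[ℂ]
            ((ℛ ℂ ((ℛ ℂ z).left j)).right k * (ℛ ℂ y).right i)) ⊗ₜ[ℂ] (ℛ ℂ z).right j := by
    intro i
    have kz := Coalgebra.sum_tmul_tmul_eq (ℛ ℂ z)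
      (fun j => ℛ ℂ ((ℛ ℂ z).left j)) (fun j => ℛ ℂ ((ℛ ℂ z).right j))
    have h2 := congrArg (pentTheta ((ℛ ℂ y).left i * x) ((ℛ ℂ y).right i)) kz
    simp only [map_sum, pentTheta_tmul] at h2
    exact h2.symm
  rw [Finset.sum_congr rfl fun i _ => key i]
  rw [Finset.sum_comm]
  refine Finset.sum_congr rfl fun j _ => ?_
  rw [Finset.sum_comm]
  refine Finset.sum_congr rfl fun k _ => Finset.sum_congr rfl fun i _ => ?_
  rw [mul_assoc]

theorem pentagon_equation
    (Sinv : A →ₗ[ℂ] A)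
    (hS₁ : HopfAlgebra.antipode (R := ℂ) (A := A) ∘ₗ Sinv = LinearMap.id)
    (hS₂ : Sinv ∘ₗ HopfAlgebra.antipode (R := ℂ) (A := A) = LinearMap.id)
    (W : A ⊗[ℂ] A →ₗ[ℂ] A ⊗[ℂ] A)
    (hW : ∀ (x x' : A) (ι : Type*) (r : Coalgebra.Repr ℂ x' ι),
      W (x ⊗ₜ[ℂ] x') = ∑ i ∈ r.index, (Sinv (r.left i) * x) ⊗ₜ[ℂ] r.right i) :
    leg12 W ∘ₗ leg13 W ∘ₗ leg23 W = leg23 W ∘ₗ leg12 W := by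
  have hVW := pent_VW Sinv hS₁ hS₂ W hW
  have hWV := pent_WV Sinv hS₁ hS₂ W hW
  -- pointwise cancellation lemmas for all three legs, in both orders
  have c12 : ∀ t, leg12 W (leg12 pentV t) = t := fun t => by
    have h : leg12 W ∘ₗ leg12 pentV = LinearMap.id := by
      rw [← pent_leg12_comp, hWV, pent_leg12_id]
    simpa using LinearMap.congr_fun h t
  have c13 : ∀ t, leg13 W (leg13 pentV t) = t := fun t => by
    have h : leg13 W ∘ₗ leg13 pentV = LinearMap.id := by
      rw [← pent_leg13_comp, hWV, pent_leg13_id]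
    simpa using LinearMap.congr_fun h t
  have c23 : ∀ t, leg23 W (leg23 pentV t) = t := fun t => by
    have h : leg23 W ∘ₗ leg23 pentV = LinearMap.id := by
      rw [← pent_leg23_comp, hWV, pent_leg23_id]
    simpa using LinearMap.congr_fun h t
  have c12' : ∀ t, leg12 pentV (leg12 W t) = t := fun t => by
    have h : leg12 pentV ∘ₗ leg12 W = LinearMap.id := by
      rw [← pent_leg12_comp, hVW, pent_leg12_id]
    simpa using LinearMap.congr_fun h t
  have c23' : ∀ t, leg23 pentV (leg23 W t) = t := fun t => by
    have h : leg23 pentV ∘ₗ leg23 W = LinearMap.id := by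
      rw [← pent_leg23_comp, hVW, pent_leg23_id]
    simpa using LinearMap.congr_fun h t
  -- pointwise pentagon for V
  have pw : ∀ u, leg23 pentV (leg13 pentV (leg12 pentV u)) = leg12 pentV (leg23 pentV u) :=
    fun u => by simpa using LinearMap.congr_fun (pent_Vpentagon (A := A)) u
  have step1 : ∀ u, leg12 W (leg13 W (leg23 W (leg12 pentV (leg23 pentV u)))) = u := by
    intro u
    rw [← pw, c23, c13, c12]
  have step2 : ∀ t, leg12 pentV (leg23 pentV (leg23 W (leg12 W t))) = t := by
    intro t
    rw [c23', c12']
  apply LinearMap.ext; intro t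
  simp only [LinearMap.comp_apply]
  conv_lhs => rw [← step2 t]
  rw [step1]

-- #print axioms check
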